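/- In the conditioned bunkbed model on G_1 with T=\{2,5,8\} at p=1/2, the events A_2 = \{1^-\to 9^-\} \cap F \cap \{1^- \not\to 5^\pm\} and B_2 = \{1^-\to 9^+\} \cap F \cap \{1^- \not\to 5^\pm\} satisfy \mathbb{P}(A_2) = \mathbb{P}(B_2), via the mirroring M(\cdot, \{(8,9)\}). -/

import Mathlib

/-- Edges of the bunkbed graph of a directed graph on vertex type `V`:
`horiz u v ε` is the copy of the directed edge `(u,v)` in bunk `ε`
(`false` = lower bunk `-`, `true` = upper bunk `+`); `vert w` is the
bidirected vertical edge `(w⁻, w⁺)`. -/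
inductive BBEdge (V : Type) : Type
  | horiz : V → V → Bool → BBEdge V
  | vert  : V → BBEdge V
deriving DecidableEq

/-- The `F`-mirroring map on single edges: vertical edges are fixed, a horizontal
edge whose shadow lies in `F` is sent to its mirrored copy in the other bunk, and
horizontal edges with shadow outside `F` are fixed. -/
def mir {V : Type} [DecidableEq V] (F : Finset (V × V)) : BBEdge V → BBEdge V
  | .horiz u v ε => if (u, v) ∈ F then .horiz u v (!ε) else .horiz u v ε
  | .vert w => .vert w

/-- The `F`-mirrored subgraph `M(H,F)`. -/
def M {V : Type} [DecidableEq V] (H : Finset (BBEdge V)) (F : Finset (V × V)) :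
    Finset (BBEdge V) :=
  H.image (mir F)
/-- The edge set of the bunkbed graph of the directed graph with vertex set `Vs`
and edge set `E`: the vertical edges at all vertices together with the two
horizontal copies of each edge. -/
def bbEdges {V : Type} [DecidableEq V] (Vs : Finset V) (E : Finset (V × V)) :
    Finset (BBEdge V) :=
  Vs.image BBEdge.vert ∪ E.image (fun p => BBEdge.horiz p.1 p.2 false) ∪
    E.image (fun p => BBEdge.horiz p.1 p.2 true)
/-- Probability of the event `A` under uniform (`p = 1/2`) Bernoulli bond
percolation on the edge set `s`: a subgraph is a uniformly random subset of `s`. -/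
noncomputable def Pr {V : Type} [DecidableEq V] (s : Finset (BBEdge V))
    (A : Finset (BBEdge V) → Prop) : ℚ :=
  letI := Classical.decPred A
  ((s.powerset.filter A).card : ℚ) / (s.powerset.card : ℚ)

/-- Conditional probability of `A` given `C` under uniform percolation on `s`. -/
noncomputable def CondPr {V : Type} [DecidableEq V] (s : Finset (BBEdge V))
    (C A : Finset (BBEdge V) → Prop) : ℚ :=
  Pr s (fun H => A H ∧ C H) / Pr s C

/-- One step of directed traversal in a subgraph `H` of the bunkbed graph:
horizontal edges are used in their direction within a bunk, and vertical edges
may be traversed in both directions. Vertices of the bunkbed graph are pairs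
`(w, ε)` with `ε : Bool` the bunk label (`false` = `-`, `true` = `+`). -/
def bbStep {V : Type} [DecidableEq V] (H : Finset (BBEdge V)) :
    V × Bool → V × Bool → Prop := fun a b =>
  (a.1 = b.1 ∧ a.2 ≠ b.2 ∧ BBEdge.vert a.1 ∈ H) ∨
    (a.2 = b.2 ∧ BBEdge.horiz a.1 b.1 a.2 ∈ H)

/-- Directed reachability `x → y` in a subgraph of the bunkbed graph. -/
def bbReach {V : Type} [DecidableEq V] (H : Finset (BBEdge V))
    (a b : V × Bool) : Prop :=
  Relation.ReflTransGen (bbStep H) a b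
/-- The conditioning event of the conditioned bunkbed model `𝓔_T`: all vertices
of `T` are posts. -/
def postCond {V : Type} [DecidableEq V] (T : Finset V)
    (H : Finset (BBEdge V)) : Prop :=
  ∀ t ∈ T, BBEdge.vert t ∈ H

/-- The edge set of the graph `G₁` of Przybyłowski's counterexample, on
vertices `1,…,9`. -/
def E1 : Finset (ℕ × ℕ) :=
  {(1,2), (1,4), (2,3), (3,4), (4,5), (3,7), (5,6), (6,7), (6,9), (7,8), (8,9)}

/-- The vertex set of `G₁`. -/
def V1 : Finset ℕ := {1, 2, 3, 4, 5, 6, 7, 8, 9}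

/-- The conditioning set `T = {2,5,8}`. -/
def T1 : Finset ℕ := {2, 5, 8}

/-- The edge set of the bunkbed graph of `G₁`. -/
def s1 : Finset (BBEdge ℕ) := bbEdges V1 E1

/-- The event `F` that the post set is exactly `{2,5,8}`. -/
def exactPosts (H : Finset (BBEdge ℕ)) : Prop :=
  ∀ w : ℕ, BBEdge.vert w ∈ H ↔ w ∈ T1

/-! Under `F`, vertex `9` is a sink, is not a post, and is entered only from `6` or `8`, while `6`
is not a post and is entered only from `5`, which `1⁻` does not reach. So `1⁻ → 9^ε` holds exactly
when `1⁻ → 8⁻` without using the edges `(8,9)` (the post at `8` makes its bunk irrelevant) and the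
copy of `(8,9)` in bunk `ε` is open. Mirroring `(8,9)` swaps these two copies and fixes every other
edge, so it is an involution of the subgraphs of the bunkbed graph carrying `A₂` onto `B₂`; both
events imply the conditioning. -/

open Relation

section Percolation

variable {V : Type} [DecidableEq V]

theorem Pr_eq_of_involutive {s : Finset (BBEdge V)} {A B : Finset (BBEdge V) → Prop}
    {f : Finset (BBEdge V) → Finset (BBEdge V)} (hf : Function.Involutive f)
    (hs : ∀ H ⊆ s, f H ⊆ s) (hAB : ∀ H ⊆ s, A H ↔ B (f H)) : Pr s A = Pr s B := by
  unfold Pr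
  congr 2
  refine Finset.card_nbij' f f ?_ ?_ (fun H _ => hf H) (fun H _ => hf H) <;>
    simp only [Finset.coe_filter, Finset.mem_powerset]
  · exact fun H ⟨hH, hA⟩ => ⟨hs H hH, (hAB H hH).1 hA⟩
  · intro H ⟨hH, hB⟩
    refine ⟨hs H hH, (hAB _ (hs H hH)).2 ?_⟩
    rwa [hf H]

end Percolation

section Mirroring

variable {V : Type} [DecidableEq V] {F : Finset (V × V)} {H : Finset (BBEdge V)}

def horizCopies (F : Finset (V × V)) : Finset (BBEdge V) :=
  F.image (fun p => .horiz p.1 p.2 false) ∪ F.image (fun p => .horiz p.1 p.2 true)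

theorem mir_involutive (F : Finset (V × V)) : Function.Involutive (mir F) := by
  rintro (⟨u, v, ε⟩ | w)
  · by_cases h : (u, v) ∈ F <;> simp [mir, h]
  · rfl

theorem mir_of_not_mem_horizCopies {e : BBEdge V} (he : e ∉ horizCopies F) : mir F e = e := by
  rcases e with ⟨u, v, ε⟩ | w
  · have huv : (u, v) ∉ F := fun h => he (by cases ε <;> simp [horizCopies, h])
    simp [mir, huv]
  · rfl

theorem mem_M_iff {e : BBEdge V} : e ∈ M H F ↔ mir F e ∈ H := by
  rw [M, ← Finset.mem_coe, Finset.coe_image,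
    Set.mem_image_iff_of_inverse (mir_involutive F) (mir_involutive F), Finset.mem_coe]

theorem M_involutive (F : Finset (V × V)) :
    Function.Involutive (fun H : Finset (BBEdge V) => M H F) := fun H => by
  ext e
  rw [mem_M_iff, mem_M_iff, mir_involutive F e]

theorem vert_mem_M {w : V} : BBEdge.vert w ∈ M H F ↔ BBEdge.vert w ∈ H := mem_M_iff

theorem horiz_mem_M {u v : V} (huv : (u, v) ∈ F) (ε : Bool) :
    BBEdge.horiz u v ε ∈ M H F ↔ BBEdge.horiz u v (!ε) ∈ H := by
  simp [mem_M_iff, mir, huv]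

theorem M_sdiff_horizCopies : M H F \ horizCopies F = H \ horizCopies F := by
  ext e
  simp only [Finset.mem_sdiff, mem_M_iff]
  exact and_congr_left fun he => by rw [mir_of_not_mem_horizCopies he]

theorem horiz_mem_bbEdges {Vs : Finset V} {E : Finset (V × V)} {u v : V} {ε : Bool} :
    BBEdge.horiz u v ε ∈ bbEdges Vs E ↔ (u, v) ∈ E := by
  cases ε <;> simp [bbEdges]

theorem mir_mem_bbEdges {Vs : Finset V} {E : Finset (V × V)} {e : BBEdge V} :
    mir F e ∈ bbEdges Vs E ↔ e ∈ bbEdges Vs E := by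
  rcases e with ⟨u, v, ε⟩ | w
  · by_cases h : (u, v) ∈ F <;> simp [mir, h, horiz_mem_bbEdges]
  · rfl

theorem M_subset_bbEdges {Vs : Finset V} {E : Finset (V × V)} (hH : H ⊆ bbEdges Vs E) :
    M H F ⊆ bbEdges Vs E := fun _ he =>
  mir_mem_bbEdges.1 (hH (mem_M_iff.1 he))

end Mirroring

theorem reflTransGen_avoiding_sinks {α : Type*} {r : α → α → Prop} {p : α → Prop} {a b : α}
    (hsink : ∀ x y, p x → ¬ r x y) (hb : ¬ p b) (h : ReflTransGen r a b) :
    ReflTransGen (fun x y => r x y ∧ ¬ p y) a b := by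
  induction h using ReflTransGen.head_induction_on with
  | refl => exact .refl
  | head hac hcb ih =>
    refine .head ⟨hac, fun hc => ?_⟩ ih
    rcases hcb.cases_head with rfl | ⟨d, hcd, -⟩
    · exact hb hc
    · exact hsink _ _ hc hcd

section Reachability

variable {V : Type} [DecidableEq V] {H : Finset (BBEdge V)}

theorem bbReach_mono {H' : Finset (BBEdge V)} (hHH' : H ⊆ H') {a b : V × Bool}
    (h : bbReach H a b) : bbReach H' a b :=
  ReflTransGen.mono (fun _ _ => Or.imp (And.imp_right (And.imp_right (@hHH' _)))
    (And.imp_right (@hHH' _))) a b h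

theorem bbReach_of_vert_mem {w : V} (hw : BBEdge.vert w ∈ H) (δ ε : Bool) :
    bbReach H (w, δ) (w, ε) := by
  by_cases h : δ = ε
  · exact h ▸ .refl
  · exact .single (Or.inl ⟨rfl, h, hw⟩)

theorem exists_horiz_of_bbReach {a : V × Bool} {v : V} {ε : Bool}
    (hv : BBEdge.vert v ∉ H) (h : bbReach H a (v, ε)) (ha : a ≠ (v, ε)) :
    ∃ u, bbReach H a (u, ε) ∧ BBEdge.horiz u v ε ∈ H := by
  rcases h.cases_tail with rfl | ⟨⟨u, δ⟩, hu, ⟨rfl, -, hvert⟩ | ⟨rfl, he⟩⟩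
  · exact absurd rfl ha
  · exact absurd hvert hv
  · exact ⟨u, hu, he⟩

end Reachability

section G1

variable {H : Finset (BBEdge ℕ)}

def F89 : Finset (ℕ × ℕ) := {(8, 9)}

def hitsFive (H : Finset (BBEdge ℕ)) : Prop :=
  bbReach H (1, false) (5, false) ∨ bbReach H (1, false) (5, true)

/-- `eventNine false` is `A₂` and `eventNine true` is `B₂`. -/
def eventNine (ε : Bool) (H : Finset (BBEdge ℕ)) : Prop :=
  bbReach H (1, false) (9, ε) ∧ exactPosts H ∧ ¬ hitsFive H

theorem postCond_of_exactPosts (h : exactPosts H) : postCond T1 H := fun t ht => (h t).2 ht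

theorem exactPosts_M {F : Finset (ℕ × ℕ)} : exactPosts (M H F) ↔ exactPosts H := by
  simp only [exactPosts, vert_mem_M]

theorem eq_five_of_mem_E1 {u : ℕ} (h : (u, 6) ∈ E1) : u = 5 := by
  simp [E1] at h; omega

theorem eq_six_or_eight_of_mem_E1 {u : ℕ} (h : (u, 9) ∈ E1) : u = 6 ∨ u = 8 := by
  simp [E1] at h; omega

theorem not_mem_E1_nine {v : ℕ} : (9, v) ∉ E1 := by
  simp [E1]

theorem not_bbStep_nine (hH : H ⊆ s1) (hp : exactPosts H) {ε : Bool} {c : ℕ × Bool} :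
    ¬ bbStep H (9, ε) c := by
  rintro (⟨-, -, hvert⟩ | ⟨-, he⟩)
  · simpa [T1] using (hp 9).1 hvert
  · exact not_mem_E1_nine (horiz_mem_bbEdges.1 (hH he))

theorem bbReach_sdiff_iff_of_ne_nine (hH : H ⊆ s1) (hp : exactPosts H) {a b : ℕ × Bool}
    (hb : b.1 ≠ 9) : bbReach (H \ horizCopies F89) a b ↔ bbReach H a b := by
  refine ⟨bbReach_mono Finset.sdiff_subset, fun h => ?_⟩
  refine ReflTransGen.mono ?_ a b (reflTransGen_avoiding_sinks (p := fun x => x.1 = 9) ?_ hb h)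
  · rintro x y ⟨⟨hxy, hne, hvert⟩ | ⟨hxy, he⟩, hy⟩
    · exact Or.inl ⟨hxy, hne, Finset.mem_sdiff.2 ⟨hvert, by simp [horizCopies]⟩⟩
    · refine Or.inr ⟨hxy, Finset.mem_sdiff.2 ⟨he, fun hbad => hy ?_⟩⟩
      simp [horizCopies, F89] at hbad
      omega
  · rintro ⟨n, ε⟩ y (rfl : n = 9)
    exact not_bbStep_nine hH hp

theorem hitsFive_sdiff_iff (hH : H ⊆ s1) (hp : exactPosts H) :
    hitsFive (H \ horizCopies F89) ↔ hitsFive H :=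
  or_congr (bbReach_sdiff_iff_of_ne_nine hH hp (by decide))
    (bbReach_sdiff_iff_of_ne_nine hH hp (by decide))

theorem not_bbReach_six (hH : H ⊆ s1) (hp : exactPosts H) (hN : ¬ hitsFive H) (δ : Bool) :
    ¬ bbReach H (1, false) (6, δ) := by
  intro h
  obtain ⟨u, hu, he⟩ := exists_horiz_of_bbReach (by simpa [T1] using hp 6) h (by simp)
  obtain rfl := eq_five_of_mem_E1 (horiz_mem_bbEdges.1 (hH he))
  cases δ
  · exact hN (.inl hu)
  · exact hN (.inr hu)

theorem bbReach_nine_iff (hH : H ⊆ s1) (hp : exactPosts H) (hN : ¬ hitsFive H) (ε : Bool) :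
    bbReach H (1, false) (9, ε) ↔
      bbReach (H \ horizCopies F89) (1, false) (8, false) ∧ BBEdge.horiz 8 9 ε ∈ H := by
  have h8 : BBEdge.vert 8 ∈ H := (hp 8).2 (by simp [T1])
  constructor
  · intro h
    obtain ⟨u, hu, he⟩ := exists_horiz_of_bbReach (by simpa [T1] using hp 9) h (by simp)
    rcases eq_six_or_eight_of_mem_E1 (horiz_mem_bbEdges.1 (hH he)) with rfl | rfl
    · exact absurd hu (not_bbReach_six hH hp hN ε)
    · exact ⟨(bbReach_sdiff_iff_of_ne_nine hH hp (by decide)).2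
        (hu.trans (bbReach_of_vert_mem h8 ε false)), he⟩
  · rintro ⟨h, he⟩
    exact ((bbReach_mono Finset.sdiff_subset h).trans (bbReach_of_vert_mem h8 false ε)).tail
      (.inr ⟨rfl, he⟩)

theorem eventNine_iff (hH : H ⊆ s1) (ε : Bool) :
    eventNine ε H ↔ bbReach (H \ horizCopies F89) (1, false) (8, false) ∧
      BBEdge.horiz 8 9 ε ∈ H ∧ exactPosts H ∧ ¬ hitsFive (H \ horizCopies F89) := by
  constructor
  · rintro ⟨h9, hp, hN⟩
    obtain ⟨h8, he⟩ := (bbReach_nine_iff hH hp hN ε).1 h9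
    exact ⟨h8, he, hp, (hitsFive_sdiff_iff hH hp).not.2 hN⟩
  · rintro ⟨h8, he, hp, hN⟩
    have hN' := (hitsFive_sdiff_iff hH hp).not.1 hN
    exact ⟨(bbReach_nine_iff hH hp hN' ε).2 ⟨h8, he⟩, hp, hN'⟩

theorem eventNine_false_iff_M (hH : H ⊆ s1) :
    eventNine false H ↔ eventNine true (M H F89) := by
  rw [eventNine_iff hH, eventNine_iff (M_subset_bbEdges hH), M_sdiff_horizCopies,
    horiz_mem_M (by simp [F89]), exactPosts_M, Bool.not_true]

end G1

/-- in the conditioned bunkbed model `𝓔_T` on `G₁` with `T = {2,5,8}`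
at `p = 1/2`, the events
`A₂ = {1⁻ → 9⁻} ∩ F ∩ {1⁻ ↛ 5^±}` and `B₂ = {1⁻ → 9⁺} ∩ F ∩ {1⁻ ↛ 5^±}`
(where `F` is the event that the posts are exactly `{2,5,8}`) satisfy
`ℙ(A₂) = ℙ(B₂)`. -/
theorem A2_eq_B2 :
    CondPr s1 (postCond T1) (fun H => bbReach H (1, false) (9, false) ∧
      exactPosts H ∧
      ¬ (bbReach H (1, false) (5, false) ∨ bbReach H (1, false) (5, true))) =
    CondPr s1 (postCond T1) (fun H => bbReach H (1, false) (9, true) ∧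
      exactPosts H ∧
      ¬ (bbReach H (1, false) (5, false) ∨ bbReach H (1, false) (5, true))) := by
  have h_post (ε : Bool) : (fun H => eventNine ε H ∧ postCond T1 H) = eventNine ε :=
    funext fun _ => propext (and_iff_left_of_imp fun h => postCond_of_exactPosts h.2.1)
  change Pr s1 (fun H => eventNine false H ∧ _) / _ = Pr s1 (fun H => eventNine true H ∧ _) / _
  rw [h_post, h_post, Pr_eq_of_involutive (s := s1) (M_involutive F89)
    (fun _ => M_subset_bbEdges) (fun _ => eventNine_false_iff_M)]
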